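/- arXiv:2409.19318 — 5 statements merged into one kernel-verified Lean document; each statement's English description precedes it below -/
import Mathlib

section
/- Let (ψ_α)_{α∈ℕ} be an orthonormal family in L² with ψ_0 equal to the constant 1 almost surely, let M = Σ_{α=0}^∞ y_α ψ_α in L², let s : ℕ → Finset(Fin d) with s(0) = ∅, and let (𝓕_u)_{u ⊆ Fin d} be a family of sub-σ-algebras such that for every α ≥ 1 and every u ⊆ Fin d: E[ψ_α | 𝓕_u] = ψ_α almost surely if s(α) ⊆ u, and E[ψ_α | 𝓕_u] = 0 almost surely otherwise. Then for every u ⊆ Fin d, Var(E[M | 𝓕_u]) = Σ_{α ≥ 1} y_α² · 1[s(α) ⊆ u]. -/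
/-!
Conditional expectation on `L²` is a continuous linear map, and by hypothesis it acts diagonally
on the orthonormal family `ψ`: it keeps `ψ α` when `s α ⊆ u` and kills it otherwise (for `α = 0`
because `ψ 0` is constant and `s 0 = ∅`). Applying it to the `L²`-convergent expansion of `M`
expands `E[M | 𝓕_u]` with coefficients `y α · 1[s α ⊆ u]`. Parseval then gives its second moment
`Σ_α y_α² · 1[s α ⊆ u]`, and its inner product with `ψ 0 = 1` gives its mean `y 0`.
-/

open MeasureTheory ProbabilityTheory Filter Finset Topology

section OrthonormalExpansion

variable {E : Type*} [NormedAddCommGroup E] [InnerProductSpace ℝ E]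
  {e : ℕ → E} {c : ℕ → ℝ} {g : E}

theorem Orthonormal.inner_eq_of_tendsto_sum (he : Orthonormal ℝ e)
    (hg : Tendsto (fun n => ∑ a ∈ range n, c a • e a) atTop (𝓝 g)) (b : ℕ) :
    inner ℝ g (e b) = c b := by
  have hconst : ∀ᶠ n in atTop, inner ℝ (∑ a ∈ range n, c a • e a) (e b) = c b :=
    eventually_gt_atTop b |>.mono fun n hn => he.inner_left_sum c (mem_range.2 hn)
  exact tendsto_nhds_unique (hg.inner tendsto_const_nhds)
    (tendsto_const_nhds.congr' (hconst.mono fun _ h => h.symm))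

theorem Orthonormal.hasSum_sq_of_tendsto_sum (he : Orthonormal ℝ e)
    (hg : Tendsto (fun n => ∑ a ∈ range n, c a • e a) atTop (𝓝 g)) :
    HasSum (fun a => c a ^ 2) (‖g‖ ^ 2) := by
  have hnorm : ∀ n, ‖∑ a ∈ range n, c a • e a‖ ^ 2 = ∑ a ∈ range n, c a ^ 2 := fun n => by
    rw [← real_inner_self_eq_norm_sq, he.inner_sum]
    simp [sq]
  rw [hasSum_iff_tendsto_nat_of_nonneg (fun a => sq_nonneg _)]
  exact (hg.norm.pow 2).congr hnorm

theorem ContinuousLinearMap.tendsto_sum_ite_of_apply_eq_ite (T : E →L[ℝ] E) {p : ℕ → Prop}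
    [DecidablePred p] (hT : ∀ a, T (e a) = if p a then e a else 0)
    (hg : Tendsto (fun n => ∑ a ∈ range n, c a • e a) atTop (𝓝 g)) :
    Tendsto (fun n => ∑ a ∈ range n, (if p a then c a else 0) • e a) atTop (𝓝 (T g)) := by
  refine ((T.continuous.tendsto g).comp hg).congr fun n => ?_
  simp only [Function.comp_apply, map_sum, map_smul, hT]
  exact sum_congr rfl fun a _ => by split_ifs <;> simp

end OrthonormalExpansion

namespace MeasureTheory

variable {Ω : Type*} {m m0 : MeasurableSpace Ω} {μ : Measure Ω}

theorem L2.inner_toLp_right (f : Lp ℝ 2 μ) {g : Ω → ℝ} (hg : MemLp g 2 μ) :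
    inner ℝ f (hg.toLp g) = ∫ x, f x * g x ∂μ := by
  rw [L2.inner_def]
  refine integral_congr_ae (hg.coeFn_toLp.mono fun x hx => ?_)
  simp [hx, mul_comm]

theorem L2.norm_sq_eq_integral_sq (f : Lp ℝ 2 μ) : ‖f‖ ^ 2 = ∫ x, f x ^ 2 ∂μ := by
  rw [← real_inner_self_eq_norm_sq, L2.inner_def]
  simp [sq]

theorem orthonormal_toLp {ι : Type*} [DecidableEq ι] {ψ : ι → Ω → ℝ} (hψ : ∀ a, MemLp (ψ a) 2 μ)
    (horth : ∀ a b, ∫ x, ψ a x * ψ b x ∂μ = if a = b then 1 else 0) :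
    Orthonormal ℝ fun a => (hψ a).toLp (ψ a) := by
  rw [orthonormal_iff_ite]
  intro a b
  rw [L2.inner_toLp_right, ← horth a b]
  exact integral_congr_ae ((hψ a).coeFn_toLp.mono fun x hx => by simp only [hx])

theorem tendsto_sum_smul_toLp {ψ : ℕ → Ω → ℝ} (hψ : ∀ a, MemLp (ψ a) 2 μ) {y : ℕ → ℝ}
    {M : Ω → ℝ} (hM : MemLp M 2 μ)
    (hconv : Tendsto (fun n => ∫ x, (M x - ∑ a ∈ range n, y a * ψ a x) ^ 2 ∂μ) atTop (𝓝 0)) :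
    Tendsto (fun n => ∑ a ∈ range n, y a • (hψ a).toLp (ψ a)) atTop (𝓝 (hM.toLp M)) := by
  rw [tendsto_iff_norm_sub_tendsto_zero]
  have hcoe : ∀ n, ⇑(∑ a ∈ range n, y a • (hψ a).toLp (ψ a) - hM.toLp M)
      =ᵐ[μ] fun x => -(M x - ∑ a ∈ range n, y a * ψ a x) := fun n => by
    have hterms := eventuallyEq_sum fun a (_ : a ∈ range n) =>
      (Lp.coeFn_smul (y a) ((hψ a).toLp (ψ a))).trans ((hψ a).coeFn_toLp.const_smul (y a))
    filter_upwards [Lp.coeFn_sub (∑ a ∈ range n, y a • (hψ a).toLp (ψ a)) (hM.toLp M),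
      Lp.coeFn_finsetSum (range n) fun a => y a • (hψ a).toLp (ψ a), hterms, hM.coeFn_toLp]
      with x hsub hsum hterms hx
    rw [hsub, Pi.sub_apply, hsum, hterms, hx]
    simp [Finset.sum_apply]
  have hnorm : ∀ n, ‖∑ a ∈ range n, y a • (hψ a).toLp (ψ a) - hM.toLp M‖
      = √(∫ x, (M x - ∑ a ∈ range n, y a * ψ a x) ^ 2 ∂μ) := fun n => by
    rw [← Real.sqrt_sq (norm_nonneg _), L2.norm_sq_eq_integral_sq]
    congr 1
    exact integral_congr_ae ((hcoe n).mono fun x hx => by simp only [hx, neg_sq])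
  simpa [hnorm] using hconv.sqrt

theorem condExpL2_toLp_eq_toLp [IsFiniteMeasure μ] (hm : m ≤ m0) {f g : Ω → ℝ}
    (hf : MemLp f 2 μ) (hg : MemLp g 2 μ) (hfg : μ[f | m] =ᵐ[μ] g) :
    (condExpL2 ℝ ℝ hm (hf.toLp f) : Lp ℝ 2 μ) = hg.toLp g :=
  Lp.ext ((hf.condExpL2_ae_eq_condExp hm).trans (hfg.trans hg.coeFn_toLp.symm))

end MeasureTheory

theorem ProbabilityTheory.variance_eq_norm_sq_sub_inner_sq {Ω : Type*} [MeasurableSpace Ω]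
    {μ : Measure Ω} [IsProbabilityMeasure μ] {X : Ω → ℝ} (f : Lp ℝ 2 μ) (hXf : X =ᵐ[μ] f)
    (e : Lp ℝ 2 μ) (he : e =ᵐ[μ] 1) :
    variance X μ = ‖f‖ ^ 2 - inner ℝ f e ^ 2 := by
  have hmean : ∫ x, X x ∂μ = inner ℝ f e := by
    rw [L2.inner_def]
    exact integral_congr_ae (by filter_upwards [hXf, he] with x hx h1 using by simp [hx, h1])
  have hsq : ∫ x, X x ^ 2 ∂μ = ‖f‖ ^ 2 := by
    rw [L2.norm_sq_eq_integral_sq]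
    exact integral_congr_ae (hXf.mono fun x hx => by simp only [hx])
  rw [variance_eq_sub ((Lp.memLp f).ae_eq hXf.symm), ← hmean, ← hsq]
  rfl

/-- Spectral decomposition of the relative importance: if conditioning
on `𝓕_u` keeps the basis elements with `s α ⊆ u` and kills the others, then
`Var(E[M | 𝓕_u]) = Σ_{α ≥ 1} y_α² · 1[s α ⊆ u]`. -/
theorem variance_condexp_pce
    {Ω : Type*} [m0 : MeasurableSpace Ω] (μ : Measure Ω) [IsProbabilityMeasure μ]
    {d : ℕ}
    (M : Ω → ℝ) (hM : MemLp M 2 μ)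
    (ψ : ℕ → Ω → ℝ) (hψ : ∀ a, MemLp (ψ a) 2 μ)
    (horth : ∀ a b, ∫ x, ψ a x * ψ b x ∂μ = if a = b then 1 else 0)
    (hψ0 : ψ 0 =ᵐ[μ] fun _ => 1)
    (y : ℕ → ℝ)
    (hconv : Tendsto
      (fun n => ∫ x, (M x - ∑ a ∈ Finset.range (n + 1), y a * ψ a x) ^ 2 ∂μ)
      atTop (nhds 0))
    (s : ℕ → Finset (Fin d)) (hs0 : s 0 = ∅)
    (F : Finset (Fin d) → MeasurableSpace Ω) (hF : ∀ u, F u ≤ m0)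
    (hcond_in : ∀ a : ℕ, 1 ≤ a → ∀ u : Finset (Fin d), s a ⊆ u →
      μ[ψ a | F u] =ᵐ[μ] ψ a)
    (hcond_out : ∀ a : ℕ, 1 ≤ a → ∀ u : Finset (Fin d), ¬ s a ⊆ u →
      μ[ψ a | F u] =ᵐ[μ] fun _ => 0)
    (u : Finset (Fin d)) :
    variance (μ[M | F u]) μ
      = ∑' a : ℕ, if 1 ≤ a ∧ s a ⊆ u then (y a) ^ 2 else 0 := by
  set e : ℕ → Lp ℝ 2 μ := fun a => (hψ a).toLp (ψ a)
  have he : Orthonormal ℝ e := orthonormal_toLp hψ horth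
  set T : Lp ℝ 2 μ →L[ℝ] Lp ℝ 2 μ :=
    (lpMeas ℝ ℝ (F u) 2 μ).subtypeL.comp (condExpL2 ℝ ℝ (hF u))
  have hTe : ∀ a, T (e a) = if s a ⊆ u then e a else 0 := by
    intro a
    rcases Nat.eq_zero_or_pos a with rfl | ha
    · rw [hs0, if_pos (empty_subset u)]
      refine condExpL2_toLp_eq_toLp (hF u) (hψ 0) (hψ 0) ((condExp_congr_ae hψ0).trans ?_)
      rw [condExp_const (hF u)]
      exact hψ0.symm
    split_ifs with hsu
    · exact condExpL2_toLp_eq_toLp (hF u) (hψ a) (hψ a) (hcond_in a ha u hsu)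
    · exact condExpL2_toLp_eq_toLp (hF u) (hψ a) MemLp.zero (hcond_out a ha u hsu)
  set c : ℕ → ℝ := fun a => if s a ⊆ u then y a else 0
  have hTM : Tendsto (fun n => ∑ a ∈ range n, c a • e a) atTop (𝓝 (T (hM.toLp M))) :=
    T.tendsto_sum_ite_of_apply_eq_ite hTe
      (tendsto_sum_smul_toLp hψ hM ((tendsto_add_atTop_iff_nat 1).mp hconv))
  have hsum : HasSum (fun a => if 1 ≤ a ∧ s a ⊆ u then y a ^ 2 else 0)
      (0 - c 0 ^ 2 + ‖T (hM.toLp M)‖ ^ 2) := by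
    have hupdate : Function.update (fun a => c a ^ 2) 0 0
        = fun a => if 1 ≤ a ∧ s a ⊆ u then y a ^ 2 else 0 := by
      funext a
      rcases a with _ | a <;> simp [c, Function.update]
    exact hupdate ▸ (he.hasSum_sq_of_tendsto_sum hTM).update 0 0
  rw [variance_eq_norm_sq_sub_inner_sq (T (hM.toLp M))
    (hM.condExpL2_ae_eq_condExp (𝕜 := ℝ) (hF u)).symm (e 0) ((hψ 0).coeFn_toLp.trans hψ0),
    he.inner_eq_of_tendsto_sum hTM 0, hsum.tsum_eq]
  ring
end

section
/- Let d ≥ 1 and let val : Finset(Fin d) → ℝ be a function taking values in {0,1}. Then for every nonempty u ⊆ Fin d and every v ⊆ Fin d, the alternating sum satisfies |Σ_{w ⊆ u} (−1)^{|u| − |w|} val(v ∪ w)| ≤ 2^{|u| − 1}. -/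
/-
Pick `x ∈ u` and pair each `w ⊆ u \ {x}` with `insert x w`: the alternating sum becomes an
alternating sum over the `2^{|u|-1}` subsets of `u \ {x}` of the increments
`val (v ∪ insert x w) - val (v ∪ w)`, each of absolute value at most `1`.
-/

open Finset

variable {α R : Type*} [DecidableEq α]

theorem sum_powerset_insert_neg_one_pow_mul [CommRing R] {s : Finset α} {x : α} (hx : x ∉ s)
    (f : Finset α → R) :
    ∑ w ∈ (insert x s).powerset, (-1 : R) ^ (#(insert x s) - #w) * f w =
      ∑ w ∈ s.powerset, (-1 : R) ^ (#s - #w) * (f (insert x w) - f w) := by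
  rw [sum_powerset_insert hx, ← sum_add_distrib]
  refine sum_congr rfl fun w hw => ?_
  have hws : #w ≤ #s := card_le_card (mem_powerset.mp hw)
  have hxw : x ∉ w := fun h => hx (mem_powerset.mp hw h)
  rw [card_insert_of_notMem hx, card_insert_of_notMem hxw, Nat.add_sub_add_right,
    Nat.sub_add_comm hws, pow_succ]
  ring

theorem abs_sum_powerset_neg_one_pow_mul_le {u : Finset α} (hu : u.Nonempty)
    {f : Finset α → ℝ} {c : ℝ} (hf : ∀ a b, |f a - f b| ≤ c) :
    |∑ w ∈ u.powerset, (-1 : ℝ) ^ (#u - #w) * f w| ≤ 2 ^ (#u - 1) * c := by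
  obtain ⟨x, hx⟩ := hu
  have hxu : x ∉ u.erase x := notMem_erase x u
  rw [← insert_erase hx, sum_powerset_insert_neg_one_pow_mul hxu, card_insert_of_notMem hxu,
    Nat.add_sub_cancel]
  calc |∑ w ∈ (u.erase x).powerset, (-1 : ℝ) ^ (#(u.erase x) - #w) * (f (insert x w) - f w)|
      ≤ ∑ w ∈ (u.erase x).powerset, |(-1 : ℝ) ^ (#(u.erase x) - #w) * (f (insert x w) - f w)| :=
        abs_sum_le_sum_abs _ _
    _ ≤ ∑ _w ∈ (u.erase x).powerset, c := sum_le_sum fun w _ => by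
        simpa only [abs_mul, abs_pow, abs_neg, abs_one, one_pow, one_mul] using hf _ _
    _ = 2 ^ #(u.erase x) * c := by simp only [sum_const, card_powerset, nsmul_eq_mul, Nat.cast_pow,
        Nat.cast_ofNat]

theorem abs_alternating_sum_le_general
    {d : ℕ} (val : Finset (Fin d) → ℝ)
    (hval : ∀ u, val u = 0 ∨ val u = 1)
    (u : Finset (Fin d)) (hu : u.Nonempty) (v : Finset (Fin d)) :
    |∑ w ∈ u.powerset, (-1 : ℝ) ^ (u.card - w.card) * val (v ∪ w)|
      ≤ 2 ^ (u.card - 1) := by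
  have hval_Icc : ∀ a, val a ∈ Set.Icc (0 : ℝ) 1 := fun a => by
    rcases hval a with h | h <;> simp [h]
  have hval_sub : ∀ a b, |val (v ∪ a) - val (v ∪ b)| ≤ 1 := fun a b =>
    abs_sub_le_of_nonneg_of_le (hval_Icc _).1 (hval_Icc _).2 (hval_Icc _).1 (hval_Icc _).2
  simpa using abs_sum_powerset_neg_one_pow_mul_le hu hval_sub

/-- For a `{0,1}`-valued game, the alternating sum over subsets of a
nonempty coalition `u` is bounded in absolute value by `2^{|u|−1}`. -/
theorem abs_alternating_sum_le
    {d : ℕ} (hd : 1 ≤ d) (val : Finset (Fin d) → ℝ)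
    (hval : ∀ u, val u = 0 ∨ val u = 1)
    (u : Finset (Fin d)) (hu : u.Nonempty) (v : Finset (Fin d)) :
    |∑ w ∈ u.powerset, (-1 : ℝ) ^ (u.card - w.card) * val (v ∪ w)|
      ≤ 2 ^ (u.card - 1) :=
  abs_alternating_sum_le_general val hval u hu v
end

section
/- Let d ≥ 1, let val : Finset(Fin d) → ℝ be a cooperation game with val(∅) = 0, and let (c_v), indexed by nonempty v ⊆ Fin d, satisfy val(u) = Σ_{∅ ≠ v ⊆ u} c_v for all u. Then for every player i ∈ Fin d, the Shapley value satisfies Sh_i(val) = Σ_{v : i ∈ v} c_v/|v|. -/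
/-!
The Shapley value is linear in the game, and the hypothesis writes `val` as `∑ v, c v • u_v`,
where `u_v u = [v ⊆ u]` is the unanimity game of `v`. In `u_v` a player `i ∉ v` never changes
the worth of a coalition, while for `i ∈ v` the marginal contribution of `i` to `w ∌ i` is
`[v \ {i} ⊆ w]`. Summing the Shapley weights `C(d-1, |w|)⁻¹` over the interval
`v \ {i} ⊆ w ⊆ [d] \ {i}` gives `d / |v|` by the hockey-stick identity,
so `Sh_i(u_v) = 1 / |v|`.
-/

/-- The Shapley value of a player `i` in the cooperation game `val`. -/
noncomputable def Shapley {d : ℕ} (val : Finset (Fin d) → ℝ) (i : Fin d) : ℝ :=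
  (d : ℝ)⁻¹ *
    ∑ v ∈ (({i}ᶜ : Finset (Fin d))).powerset,
      (((d - 1).choose v.card : ℝ))⁻¹ * (val (v ∪ {i}) - val v)

open Finset

theorem Nat.choose_div_choose_add {n k j : ℕ} (h : k + j ≤ n) :
    ((n - k).choose j : ℝ) / n.choose (k + j) = ((k + j).choose k : ℝ) / n.choose k := by
  have hkj : (n.choose (k + j) : ℝ) ≠ 0 := by exact_mod_cast (Nat.choose_pos h).ne'
  have hk : (n.choose k : ℝ) ≠ 0 := by exact_mod_cast (Nat.choose_pos (by omega)).ne'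
  rw [div_eq_div_iff hkj hk]
  have := Nat.choose_mul (n := n) (Nat.le_add_right k j)
  rw [Nat.add_sub_cancel_left] at this
  rw [mul_comm ((k + j).choose k : ℝ), mul_comm ((n - k).choose j : ℝ)]
  exact_mod_cast this.symm

theorem Nat.sum_range_choose_div_choose_add {n k : ℕ} (hk : k ≤ n) :
    ∑ j ∈ range (n - k + 1), ((n - k).choose j : ℝ) / n.choose (k + j) =
      (n + 1) / (k + 1) := by
  have hk₀ : (n.choose k : ℝ) ≠ 0 := by exact_mod_cast (Nat.choose_pos hk).ne'
  have hockey_stick :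
      ∑ j ∈ range (n - k + 1), ((k + j).choose k : ℝ) = (n + 1).choose (k + 1) := by
    have := Nat.sum_range_add_choose (n - k) k
    rw [Nat.sub_add_cancel hk] at this
    exact_mod_cast (sum_congr rfl fun j _ => by rw [add_comm k j]).trans this
  have hpascal : ((n + 1 : ℕ).choose (k + 1) : ℝ) * (k + 1) = (n + 1) * n.choose k := by
    exact_mod_cast (Nat.add_one_mul_choose_eq n k).symm
  rw [sum_congr rfl fun j hj => Nat.choose_div_choose_add (by grind),
    ← sum_div, hockey_stick, div_eq_div_iff hk₀ (by positivity)]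
  exact_mod_cast hpascal

theorem Finset.sum_Icc_inv_choose_card {α : Type*} [DecidableEq α] {t s : Finset α}
    (h : t ⊆ s) :
    ∑ w ∈ Icc t s, ((#s).choose #w : ℝ)⁻¹ = (#s + 1) / (#t + 1) := by
  have hdisj : ∀ u ∈ (s \ t).powerset, Disjoint t u := fun u hu =>
    disjoint_of_subset_right (mem_powerset.1 hu) disjoint_sdiff
  rw [Icc_eq_image_powerset h, sum_image fun u hu u' hu' huu' => by
      rw [← union_sdiff_cancel_left (hdisj u hu), huu', union_sdiff_cancel_left (hdisj u' hu')],
    sum_congr rfl fun u hu => by rw [card_union_of_disjoint (hdisj u hu)],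
    sum_powerset_apply_card fun m => ((#s).choose (#t + m) : ℝ)⁻¹, card_sdiff_of_subset h]
  simp only [nsmul_eq_mul, ← div_eq_mul_inv]
  exact_mod_cast Nat.sum_range_choose_div_choose_add (card_le_card h)

def unanimityGame {α : Type*} [DecidableEq α] (v u : Finset α) : ℝ := if v ⊆ u then 1 else 0

theorem shapley_sum_mul {d : ℕ} {ι : Type*} (s : Finset ι) (c : ι → ℝ)
    (g : ι → Finset (Fin d) → ℝ) (i : Fin d) :
    Shapley (fun u => ∑ v ∈ s, c v * g v u) i = ∑ v ∈ s, c v * Shapley (g v) i := by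
  simp only [Shapley, ← sum_sub_distrib, mul_sum]
  rw [sum_comm]
  exact sum_congr rfl fun _ _ => sum_congr rfl fun _ _ => by ring

theorem shapley_unanimityGame {d : ℕ} (v : Finset (Fin d)) (i : Fin d) :
    Shapley (unanimityGame v) i = if i ∈ v then (#v : ℝ)⁻¹ else 0 := by
  simp only [Shapley, union_singleton]
  split_ifs with hiv
  · have hcompl : ∀ w ∈ ({i}ᶜ : Finset (Fin d)).powerset, i ∉ w := fun w hw hiw =>
      by simpa using mem_powerset.1 hw hiw
    have hmarginal : ∀ w ∈ ({i}ᶜ : Finset (Fin d)).powerset,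
        unanimityGame v (insert i w) - unanimityGame v w = unanimityGame (v.erase i) w := by
      intro w hw
      have hvw : ¬ v ⊆ w := fun hvw => hcompl w hw (hvw hiv)
      simp [unanimityGame, subset_insert_iff, hvw]
    have herase : v.erase i ⊆ {i}ᶜ := fun j hj => by simpa using ne_of_mem_erase hj
    have hcard : #({i}ᶜ : Finset (Fin d)) = d - 1 := by simp [card_compl]
    rw [sum_congr rfl fun w hw => by rw [hmarginal w hw]]
    simp only [unanimityGame, mul_ite, mul_one, mul_zero]
    rw [← sum_filter, ← Icc_eq_filter_powerset, ← hcard, sum_Icc_inv_choose_card herase,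
      hcard, card_erase_of_mem hiv, Nat.cast_pred i.pos, Nat.cast_pred (card_pos.2 ⟨i, hiv⟩),
      sub_add_cancel, sub_add_cancel, div_eq_mul_inv, inv_mul_cancel_left₀]
    exact_mod_cast i.pos.ne'
  · have hmarginal : ∀ w ∈ ({i}ᶜ : Finset (Fin d)).powerset,
        unanimityGame v (insert i w) - unanimityGame v w = 0 := by
      intro w _
      simp [unanimityGame, subset_insert_iff_of_notMem hiv]
    rw [sum_eq_zero fun w hw => by rw [hmarginal w hw, mul_zero], mul_zero]

theorem shapley_eq_sum_dividends_general
    {d : ℕ} (val : Finset (Fin d) → ℝ)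
    (c : Finset (Fin d) → ℝ)
    (hc : ∀ u : Finset (Fin d), val u = ∑ v ∈ u.powerset.erase ∅, c v)
    (i : Fin d) :
    Shapley val i
      = ∑ v ∈ Finset.univ.powerset.filter (fun v : Finset (Fin d) => i ∈ v),
          c v / (v.card : ℝ) := by
  have hval : val = fun u => ∑ v ∈ univ.powerset.erase ∅, c v * unanimityGame v u := by
    funext u
    simp only [hc u, unanimityGame, mul_ite, mul_one, mul_zero, ← sum_filter, filter_erase]
    congr 2
    ext v
    simp
  rw [hval, shapley_sum_mul]
  simp only [shapley_unanimityGame, mul_ite, mul_zero, ← sum_filter, div_eq_mul_inv, filter_erase]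
  rw [erase_eq_of_notMem (a := ∅) fun h => notMem_empty i (mem_filter.1 h).2]

/-- If `val(u) = Σ_{∅ ≠ v ⊆ u} c_v` (Harsanyi dividends), then the
Shapley value of player `i` is `Σ_{v : i ∈ v} c_v/|v|`. -/
theorem shapley_eq_sum_dividends
    {d : ℕ} (hd : 1 ≤ d) (val : Finset (Fin d) → ℝ) (h0 : val ∅ = 0)
    (c : Finset (Fin d) → ℝ)
    (hc : ∀ u : Finset (Fin d), val u = ∑ v ∈ u.powerset.erase ∅, c v)
    (i : Fin d) :
    Shapley val i
      = ∑ v ∈ Finset.univ.powerset.filter (fun v : Finset (Fin d) => i ∈ v),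
          c v / (v.card : ℝ) :=
  shapley_eq_sum_dividends_general val c hc i
end

section
/- Let d ≥ 1, let w : Fin d → Fin d → ℝ be symmetric weights (w i j = w j i), and define the induced-subgraph game val(u) := Σ_{i ∈ u} w i i + Σ_{{i,j} : i ≠ j, i ∈ u, j ∈ u, counted once per unordered pair} w i j. Then for every player i ∈ Fin d, the Shapley value satisfies Sh_i(val) = w i i + (1/2) · Σ_{j ≠ i} w i j. -/
/-!
For symmetric `w`, the marginal contribution of `i` to a coalition `v ∌ i` is
`w i i + ∑ j ∈ v, w i j`. Hence the Shapley value is `w i i` times the total Shapley weight of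
all coalitions, which is `1`, plus each `w i j` times the total weight of the coalitions
containing `j`, which is `1/2`: with `n = d - 1`, the coalitions of size `k + 1` containing `j`
have weight `C(n - 1, k) / (d · C(n, k + 1)) = (k + 1) / (d · n)`, and
`∑_{k < n} (k + 1) = n d / 2`.
-/

open Finset

namespace Finset

variable {α : Type*}

theorem two_nsmul_sum_offDiag_filter_lt {M : Type*} [LinearOrder α] [AddCommMonoid M]
    (s : Finset α) {f : α → α → M} (hf : ∀ a b, f a b = f b a) :
    2 • ∑ p ∈ s.offDiag with p.1 < p.2, f p.1 p.2 = ∑ p ∈ s.offDiag, f p.1 p.2 := by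
  rw [two_nsmul, ← sum_filter_add_sum_filter_not s.offDiag (fun p => p.1 < p.2)]
  congr 1
  refine sum_nbij' Prod.swap Prod.swap ?_ ?_ (fun _ _ => rfl) (fun _ _ => rfl)
    (fun p _ => hf p.1 p.2)
  · intro p hp
    simp only [mem_filter, mem_offDiag, Prod.fst_swap, Prod.snd_swap] at hp ⊢
    exact ⟨⟨hp.1.2.1, hp.1.1, hp.1.2.2.symm⟩, hp.2.not_gt⟩
  · intro p hp
    simp only [mem_filter, mem_offDiag, Prod.fst_swap, Prod.snd_swap] at hp ⊢
    exact ⟨⟨hp.1.2.1, hp.1.1, hp.1.2.2.symm⟩, lt_of_le_of_ne (not_lt.1 hp.2) hp.1.2.2.symm⟩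

theorem sum_powerset_mul_sum {M : Type*} [NonUnitalNonAssocSemiring M] [DecidableEq α]
    (s : Finset α) (c : Finset α → M) (g : α → M) :
    ∑ t ∈ s.powerset, c t * ∑ a ∈ t, g a = ∑ a ∈ s, (∑ t ∈ s.powerset with a ∈ t, c t) * g a := by
  simp_rw [mul_sum, sum_mul]
  refine sum_comm' fun t a => ?_
  simp only [mem_powerset, mem_filter]
  exact ⟨fun ⟨hts, hat⟩ => ⟨⟨hts, hat⟩, hts hat⟩, fun ⟨h, _⟩ => h⟩

theorem sum_powerset_inv_choose_card (s : Finset α) :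
    ∑ t ∈ s.powerset, ((#s).choose #t : ℝ)⁻¹ = #s + 1 := by
  rw [sum_powerset_apply_card (fun k => ((#s).choose k : ℝ)⁻¹)]
  have hterm : ∀ k ∈ range (#s + 1), (#s).choose k • ((#s).choose k : ℝ)⁻¹ = 1 := by
    intro k hk
    have : ((#s).choose k : ℝ) ≠ 0 :=
      Nat.cast_ne_zero.2 (Nat.choose_pos (Nat.lt_succ_iff.1 (mem_range.1 hk))).ne'
    rw [nsmul_eq_mul, mul_inv_cancel₀ this]
  rw [sum_congr rfl hterm, sum_const, card_range, nsmul_one, Nat.cast_succ]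

theorem sum_powerset_inv_choose_succ_card_succ (s : Finset α) :
    ∑ t ∈ s.powerset, ((#s + 1).choose (#t + 1) : ℝ)⁻¹ = (#s + 2) / 2 := by
  set n := #s
  have hterm : ∀ k ∈ range (n + 1),
      n.choose k • ((n + 1).choose (k + 1) : ℝ)⁻¹ = (k + 1) / (n + 1) := by
    intro k hk
    have hpos : ((n + 1).choose (k + 1) : ℝ) ≠ 0 :=
      Nat.cast_ne_zero.2 (Nat.choose_pos (by simpa using hk)).ne'
    have hpascal : ((n + 1 : ℕ) : ℝ) * n.choose k = (n + 1).choose (k + 1) * (k + 1 : ℕ) := by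
      exact_mod_cast n.add_one_mul_choose_eq k
    rw [nsmul_eq_mul, eq_div_iff (by positivity)]
    push_cast at hpascal
    field_simp
    linarith
  have gauss : ∀ m : ℕ, ∑ k ∈ range (m + 1), ((k : ℝ) + 1) = (m + 1) * (m + 2) / 2 := by
    intro m
    induction m with
    | zero => norm_num
    | succ m ih => rw [sum_range_succ, ih]; push_cast; ring
  rw [sum_powerset_apply_card (fun k => ((n + 1).choose (k + 1) : ℝ)⁻¹), sum_congr rfl hterm,
    ← sum_div, gauss]
  field_simp

theorem sum_powerset_filter_mem_inv_choose_card [DecidableEq α] {s : Finset α} {a : α}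
    (ha : a ∈ s) :
    ∑ t ∈ s.powerset with a ∈ t, ((#s).choose #t : ℝ)⁻¹ = (#s + 1) / 2 := by
  have har : a ∉ s.erase a := notMem_erase a s
  rw [← insert_erase ha, sum_filter, sum_powerset_insert har, card_insert_of_notMem har]
  have hmiss : ∀ t ∈ (s.erase a).powerset, a ∉ t := fun t ht hat => har (mem_powerset.1 ht hat)
  rw [sum_eq_zero fun t ht => if_neg (hmiss t ht), zero_add,
    sum_congr rfl fun t ht => by
      rw [if_pos (mem_insert_self a t), card_insert_of_notMem (hmiss t ht)],
    sum_powerset_inv_choose_succ_card_succ]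
  push_cast
  ring

end Finset

def inducedSubgraphGame {α : Type*} [LinearOrder α] (w : α → α → ℝ) (u : Finset α) : ℝ :=
  ∑ a ∈ u, w a a + ∑ p ∈ u.offDiag with p.1 < p.2, w p.1 p.2

section InducedSubgraphGame

variable {α : Type*} [LinearOrder α] {w : α → α → ℝ}

theorem two_mul_inducedSubgraphGame (hw : ∀ a b, w a b = w b a) (u : Finset α) :
    2 * inducedSubgraphGame w u = ∑ a ∈ u, w a a + ∑ a ∈ u, ∑ b ∈ u, w a b := by
  rw [inducedSubgraphGame, ← sum_product', ← diag_union_offDiag,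
    sum_union (disjoint_diag_offDiag u), sum_diag, ← two_nsmul_sum_offDiag_filter_lt u hw,
    nsmul_eq_mul]
  push_cast
  ring

theorem inducedSubgraphGame_insert_sub (hw : ∀ a b, w a b = w b a) {u : Finset α} {a : α}
    (ha : a ∉ u) :
    inducedSubgraphGame w (insert a u) - inducedSubgraphGame w u = w a a + ∑ b ∈ u, w a b := by
  have h₁ := two_mul_inducedSubgraphGame hw (insert a u)
  have h₂ := two_mul_inducedSubgraphGame hw u
  simp only [sum_insert ha, sum_add_distrib] at h₁
  rw [sum_congr rfl fun b _ => hw b a] at h₁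
  linarith

end InducedSubgraphGame

theorem shapley_induced_subgraph_general
    {d : ℕ} (w : Fin d → Fin d → ℝ)
    (hw : ∀ i j, w i j = w j i) (i : Fin d) :
    Shapley
      (fun u => ∑ j ∈ u, w j j +
        ∑ p ∈ u.offDiag.filter (fun p : Fin d × Fin d => p.1 < p.2), w p.1 p.2) i
      = w i i + (1 / 2) * ∑ j ∈ Finset.univ.erase i, w i j := by
  change Shapley (inducedSubgraphGame w) i = _
  have hcard : #(univ.erase i) = d - 1 := by simp
  have hd : (d : ℝ) = #(univ.erase i) + 1 := by
    rw [hcard]; exact_mod_cast (Nat.succ_pred_eq_of_pos i.pos).symm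
  have hmarg : ∀ v ∈ (univ.erase i).powerset,
      inducedSubgraphGame w (v ∪ {i}) - inducedSubgraphGame w v = w i i + ∑ j ∈ v, w i j := by
    intro v hv
    rw [union_singleton]
    exact inducedSubgraphGame_insert_sub hw fun h => by simpa using mem_powerset.1 hv h
  rw [Shapley, compl_singleton, ← hcard, hd, sum_congr rfl fun v hv => by rw [hmarg v hv, mul_add],
    sum_add_distrib, ← sum_mul, sum_powerset_mul_sum, sum_powerset_inv_choose_card,
    sum_congr rfl fun j hj => by rw [sum_powerset_filter_mem_inv_choose_card hj], ← mul_sum]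
  field_simp

/-- For an induced-subgraph game with symmetric weights `w`, where
`val(u) = Σ_{i∈u} w i i + Σ_{{i,j}⊆u, i≠j} w i j` (each unordered pair counted once),
the Shapley value of player `i` is `w i i + (1/2)·Σ_{j≠i} w i j`. -/
theorem shapley_induced_subgraph
    {d : ℕ} (hd : 1 ≤ d) (w : Fin d → Fin d → ℝ)
    (hw : ∀ i j, w i j = w j i) (i : Fin d) :
    Shapley
      (fun u => ∑ j ∈ u, w j j +
        ∑ p ∈ u.offDiag.filter (fun p : Fin d × Fin d => p.1 < p.2), w p.1 p.2) i
      = w i i + (1 / 2) * ∑ j ∈ Finset.univ.erase i, w i j :=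
  shapley_induced_subgraph_general w hw i
end

section
/- Let d ≥ 1 and let val : Finset(Fin d) → ℝ be a cooperation game with val(∅) = 0. Define the dual game ṽal(u) := val(Fin d) − val((Fin d) \ u). Then ṽal is a cooperation game (ṽal(∅) = 0) and for every player i ∈ Fin d, Sh_i(val) = Sh_i(ṽal); i.e., the Shapley attribution is unchanged when the value of each coalition is replaced by the complementary remainder of the grand-coalition value. -/
open Finset

theorem Finset.sum_powerset_sdiff {α β : Type*} [DecidableEq α] [AddCommMonoid β]
    (s : Finset α) (f : Finset α → β) :
    ∑ t ∈ s.powerset, f (s \ t) = ∑ t ∈ s.powerset, f t :=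
  sum_nbij' (s \ ·) (s \ ·) (by simp) (by simp)
    (fun _ ht => sdiff_sdiff_eq_self (mem_powerset.1 ht))
    (fun _ ht => sdiff_sdiff_eq_self (mem_powerset.1 ht)) (fun _ _ => rfl)

theorem Nat.choose_card_sdiff {α : Type*} [DecidableEq α] {s t : Finset α} (h : t ⊆ s) :
    s.card.choose (s \ t).card = s.card.choose t.card := by
  rw [card_sdiff_of_subset h, Nat.choose_symm (card_le_card h)]

section DualGame

variable {α β : Type*} [Fintype α] [DecidableEq α] [AddCommGroup β]

def dualGame (val : Finset α → β) (u : Finset α) : β :=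
  val univ - val uᶜ

theorem dualGame_empty (val : Finset α → β) : dualGame val ∅ = 0 := by
  simp [dualGame]

theorem dualGame_marginal_compl_sdiff (val : Finset α → β) {i : α} {v : Finset α}
    (hi : i ∉ v) :
    dualGame val ({i}ᶜ \ v ∪ {i}) - dualGame val ({i}ᶜ \ v) = val (v ∪ {i}) - val v := by
  have hcompl_union : ({i}ᶜ \ v ∪ {i})ᶜ = v := by
    ext x
    by_cases hx : x = i
    · subst hx; simp [hi]
    · simp [hx]
  have hcompl : ({i}ᶜ \ v)ᶜ = v ∪ {i} := by
    ext x
    by_cases hx : x = i <;> simp [hx]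
  simp only [dualGame, hcompl_union, hcompl]
  abel

end DualGame

theorem shapley_dualGame {d : ℕ} (val : Finset (Fin d) → ℝ) (i : Fin d) :
    Shapley (dualGame val) i = Shapley val i := by
  unfold Shapley
  congr 1
  rw [← sum_powerset_sdiff]
  refine sum_congr rfl fun v hv => ?_
  have hvi : v ⊆ {i}ᶜ := mem_powerset.1 hv
  have hcard : ({i}ᶜ : Finset (Fin d)).card = d - 1 := by simp [card_compl]
  rw [dualGame_marginal_compl_sdiff val fun h => by simpa using hvi h, ← hcard,
    Nat.choose_card_sdiff hvi]

theorem shapley_dual_game_general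
    {d : ℕ} (val : Finset (Fin d) → ℝ) :
    (fun u : Finset (Fin d) => val Finset.univ - val uᶜ) ∅ = 0 ∧
    ∀ i : Fin d,
      Shapley val i
        = Shapley (fun u : Finset (Fin d) => val Finset.univ - val uᶜ) i :=
  ⟨dualGame_empty val, fun i => (shapley_dualGame val i).symm⟩

/-- The dual game `ṽal(u) = val(Fin d) − val((Fin d) \ u)` is again a
cooperation game, and it has the same Shapley attribution as `val`. -/
theorem shapley_dual_game
    {d : ℕ} (hd : 1 ≤ d) (val : Finset (Fin d) → ℝ) (h0 : val ∅ = 0) :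
    (fun u : Finset (Fin d) => val Finset.univ - val uᶜ) ∅ = 0 ∧
    ∀ i : Fin d,
      Shapley val i
        = Shapley (fun u : Finset (Fin d) => val Finset.univ - val uᶜ) i :=
  shapley_dual_game_general val
end
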